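/- arXiv:1804.11007 — 8 statements merged into one kernel-verified Lean document; each statement's English description precedes it below -/
import Mathlib

section
/- Let A, B, C and P₁, P₂, P₃ be points in ℝ², and suppose each Pᵢ has barycentric coordinates (xᵢ, yᵢ, zᵢ) with respect to the triangle ABC, i.e. Pᵢ = xᵢ·A + yᵢ·B + zᵢ·C with xᵢ + yᵢ + zᵢ = 1. Then the signed area of triangle P₁P₂P₃ equals the determinant of the 3×3 matrix whose rows are (x₁, y₁, z₁), (x₂, y₂, z₂), (x₃, y₃, z₃) times the signed area of triangle ABC (Bottema's theorem). -/
/-- The signed area of the triangle `P Q R` in `ℝ²`: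
half the determinant of the `2 × 2` matrix with columns `Q - P` and `R - P`. -/
noncomputable def signedArea (P Q R : ℝ × ℝ) : ℝ :=
  (1 / 2) * Matrix.det !![Q.1 - P.1, R.1 - P.1; Q.2 - P.2, R.2 - P.2]

/-- **Bottema's theorem.** If `P₁, P₂, P₃` have barycentric coordinates
`(xᵢ, yᵢ, zᵢ)` with respect to the triangle `A B C`, then the signed area of
`P₁ P₂ P₃` is the determinant of the matrix of barycentric coordinates times
the signed area of `A B C`. -/
theorem bottema (A B C P₁ P₂ P₃ : ℝ × ℝ) (x₁ y₁ z₁ x₂ y₂ z₂ x₃ y₃ z₃ : ℝ)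
    (h₁ : P₁ = x₁ • A + y₁ • B + z₁ • C) (hs₁ : x₁ + y₁ + z₁ = 1)
    (h₂ : P₂ = x₂ • A + y₂ • B + z₂ • C) (hs₂ : x₂ + y₂ + z₂ = 1)
    (h₃ : P₃ = x₃ • A + y₃ • B + z₃ • C) (hs₃ : x₃ + y₃ + z₃ = 1) :
    signedArea P₁ P₂ P₃ =
      Matrix.det !![x₁, y₁, z₁; x₂, y₂, z₂; x₃, y₃, z₃] * signedArea A B C := by
  have hz₁ : z₁ = 1 - x₁ - y₁ := by linarith
  have hz₂ : z₂ = 1 - x₂ - y₂ := by linarith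
  have hz₃ : z₃ = 1 - x₃ - y₃ := by linarith
  subst hz₁ hz₂ hz₃ h₁ h₂ h₃
  simp [signedArea, Matrix.det_fin_two_of, Matrix.det_fin_three, Prod.smul_def,
    Prod.fst_add, Prod.snd_add, smul_eq_mul]
  ring
end

section
/- Let A, B, C be points in ℝ² and let r, s, t be real numbers. Define R = B + r·(C − B), S = C + s·(A − C), T = A + t·(B − A). Then the signed area of triangle RST equals (r·s·t + (1 − r)·(1 − s)·(1 − t)) times the signed area of triangle ABC. -/
/-- If `R, S, T` lie on the (extended) sides of triangle `A B C` with parameters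
`r, s, t`, then the signed area of `R S T` is
`(r·s·t + (1 − r)·(1 − s)·(1 − t))` times the signed area of `A B C`. -/
theorem signedArea_inscribed (A B C : ℝ × ℝ) (r s t : ℝ)
    (R S T : ℝ × ℝ)
    (hR : R = B + r • (C - B)) (hS : S = C + s • (A - C)) (hT : T = A + t • (B - A)) :
    signedArea R S T = (r * s * t + (1 - r) * (1 - s) * (1 - t)) * signedArea A B C := by
  subst hR hS hT
  simp only [signedArea, Matrix.det_fin_two_of, Prod.fst_add, Prod.snd_add,
    Prod.smul_fst, Prod.smul_snd, Prod.fst_sub, Prod.snd_sub, smul_eq_mul]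
  ring
end

section
/- Let A, B, C be points in ℝ². For r, s, t ∈ [0,1] define R(r) = B + r·(C − B), S(s) = C + s·(A − C), T(t) = A + t·(B − A). Then the integral over (r,s,t) ∈ [0,1]³ (with respect to Lebesgue measure) of the signed area of triangle R(r)S(s)T(t) equals (1/4) times the signed area of triangle ABC; that is, the average area of a triangle inscribed in ABC with one uniformly random vertex on each side is one-fourth the area of ABC. -/
open MeasureTheory

lemma lin_int (a b : ℝ) : ∫ x in Set.Icc (0:ℝ) 1, (a + b * x) = a + b / 2 := by
  rw [integral_Icc_eq_integral_Ioc, ← intervalIntegral.integral_of_le zero_le_one,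
    intervalIntegral.integral_add intervalIntegrable_const
      (intervalIntegral.intervalIntegrable_id.const_mul b),
    intervalIntegral.integral_const_mul, integral_id, intervalIntegral.integral_const]
  simp only [smul_eq_mul]; ring

lemma signedArea_key (A B C : ℝ × ℝ) (r s t : ℝ) :
    signedArea (B + r • (C - B)) (C + s • (A - C)) (A + t • (B - A)) =
    signedArea A B C * (1 - r - s - t + r * s + s * t + r * t) := by
  simp only [signedArea, Matrix.det_fin_two_of, Prod.fst_add, Prod.snd_add,
    Prod.smul_fst, Prod.smul_snd, Prod.fst_sub, Prod.snd_sub, smul_eq_mul]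
  ring

/-- The average signed area of a triangle inscribed in `A B C`, with one vertex
uniformly distributed on each side, is one-fourth of the signed area of `A B C`. -/
theorem average_inscribed_area (A B C : ℝ × ℝ) :
    ∫ p in Set.Icc (0:ℝ) 1 ×ˢ Set.Icc (0:ℝ) 1 ×ˢ Set.Icc (0:ℝ) 1,
      signedArea (B + p.1 • (C - B)) (C + p.2.1 • (A - C)) (A + p.2.2 • (B - A)) =
    (1 / 4) * signedArea A B C := by
  set Δ := signedArea A B C with hΔ
  have hfun : (fun p : ℝ × ℝ × ℝ =>
      signedArea (B + p.1 • (C - B)) (C + p.2.1 • (A - C)) (A + p.2.2 • (B - A))) =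
      fun p : ℝ × ℝ × ℝ =>
        Δ * (1 - p.1 - p.2.1 - p.2.2 + p.1 * p.2.1 + p.2.1 * p.2.2 + p.1 * p.2.2) := by
    funext p
    exact signedArea_key A B C p.1 p.2.1 p.2.2
  rw [hfun, MeasureTheory.integral_const_mul]
  have hg : (∫ p in Set.Icc (0:ℝ) 1 ×ˢ Set.Icc (0:ℝ) 1 ×ˢ Set.Icc (0:ℝ) 1,
      (1 - p.1 - p.2.1 - p.2.2 + p.1 * p.2.1 + p.2.1 * p.2.2 + p.1 * p.2.2)) = 1 / 4 := by
    have hcont : Continuous (fun p : ℝ × ℝ × ℝ =>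
        (1 - p.1 - p.2.1 - p.2.2 + p.1 * p.2.1 + p.2.1 * p.2.2 + p.1 * p.2.2)) := by
      fun_prop
    have hint : IntegrableOn (fun p : ℝ × ℝ × ℝ =>
        (1 - p.1 - p.2.1 - p.2.2 + p.1 * p.2.1 + p.2.1 * p.2.2 + p.1 * p.2.2))
        (Set.Icc (0:ℝ) 1 ×ˢ Set.Icc (0:ℝ) 1 ×ˢ Set.Icc (0:ℝ) 1) volume :=
      hcont.continuousOn.integrableOn_compact
        (isCompact_Icc.prod (isCompact_Icc.prod isCompact_Icc))
    rw [Measure.volume_eq_prod] at hint ⊢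
    rw [MeasureTheory.setIntegral_prod _ hint]
    have hinner : ∀ r : ℝ, (∫ q in Set.Icc (0:ℝ) 1 ×ˢ Set.Icc (0:ℝ) 1,
        (1 - r - q.1 - q.2 + r * q.1 + q.1 * q.2 + r * q.2)) = 1 / 4 := by
      intro r
      have hcont2 : Continuous (fun q : ℝ × ℝ =>
          (1 - r - q.1 - q.2 + r * q.1 + q.1 * q.2 + r * q.2)) := by fun_prop
      have hint2 : IntegrableOn (fun q : ℝ × ℝ =>
          (1 - r - q.1 - q.2 + r * q.1 + q.1 * q.2 + r * q.2))
          (Set.Icc (0:ℝ) 1 ×ˢ Set.Icc (0:ℝ) 1) volume :=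
        hcont2.continuousOn.integrableOn_compact (isCompact_Icc.prod isCompact_Icc)
      rw [Measure.volume_eq_prod] at hint2 ⊢
      rw [MeasureTheory.setIntegral_prod _ hint2]
      have h1 : ∀ s : ℝ, (∫ t in Set.Icc (0:ℝ) 1,
          (1 - r - s - t + r * s + s * t + r * t)) = 1 / 2 - r / 2 - s / 2 + r * s := by
        intro s
        have heq : (fun t : ℝ => 1 - r - s - t + r * s + s * t + r * t) =
            fun t : ℝ => (1 - r - s + r * s) + (s + r - 1) * t := by
          funext t; ring
        rw [heq, lin_int]; ring
      simp only [h1]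
      have heq2 : (fun s : ℝ => 1 / 2 - r / 2 - s / 2 + r * s) =
          fun s : ℝ => (1 / 2 - r / 2) + (r - 1 / 2) * s := by
        funext s; ring
      rw [heq2, lin_int]; ring
    simp only [hinner]
    have : (∫ _ in Set.Icc (0:ℝ) 1, (1 / 4 : ℝ)) =
        (1 / 4 : ℝ) + 0 / 2 := by
      have heq3 : (fun _ : ℝ => (1 / 4 : ℝ)) = fun x : ℝ => (1 / 4 : ℝ) + 0 * x := by
        funext x; ring
      rw [heq3, lin_int]
    rw [this]; ring
  rw [hg]; ring
end

section
/- For every natural number n, the integral of Q(r,s,t)^n over the unit cube [0,1]³ with respect to Lebesgue measure equals (1/((n+1)·((n+1)!)²)) · Σ_{k=0}^{n} ((n−k)!)²·(k!)². In other words, the n-th moment of the area ratio Q is μₙ = (Σ_{k=0}^{n} ((n−k)! · k!)²) / ((n+1)·((n+1)!)²). -/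
open MeasureTheory Nat

/-!
Expanding `Q(r,s,t)^n = (r s t + (1-r)(1-s)(1-t))^n` by the binomial theorem, each term
`C(n,k) (r s t)^k ((1-r)(1-s)(1-t))^(n-k)` splits into a product of one-variable factors
`u^k (1-u)^(n-k)`, so its integral over the cube is `C(n,k) B(k+1, n-k+1)^3` with the Beta integral
`B(k+1, n-k+1) = k! (n-k)! / (n+1)!`. Since `C(n,k) k! (n-k)! = n!`, the `k`-th term is
`(k! (n-k)!)^2 / ((n+1) ((n+1)!)^2)`.
-/

theorem integral_pow_mul_one_sub_pow (a b : ℕ) :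
    ∫ x in (0:ℝ)..1, x ^ a * (1 - x) ^ b = (a ! * b ! / (a + b + 1)! : ℝ) := by
  have hB := Complex.betaIntegral_eq_Gamma_mul_div (a + 1) (b + 1)
    (by simp; positivity) (by simp; positivity)
  have hsum : (a + 1 + (b + 1) : ℂ) = ((a + b + 1 : ℕ) : ℂ) + 1 := by push_cast; ring
  simp only [Complex.betaIntegral, add_sub_cancel_right, Complex.cpow_natCast, hsum,
    Complex.Gamma_nat_eq_factorial] at hB
  apply Complex.ofReal_injective
  rw [← intervalIntegral.integral_ofReal]
  push_cast
  exact_mod_cast hB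

theorem setIntegral_Icc_pow_mul_one_sub_pow {k n : ℕ} (hk : k ≤ n) :
    ∫ x in Set.Icc (0:ℝ) 1, x ^ k * (1 - x) ^ (n - k) = (k ! * (n - k)! / (n + 1)! : ℝ) := by
  rw [integral_Icc_eq_integral_Ioc, ← intervalIntegral.integral_of_le zero_le_one,
    integral_pow_mul_one_sub_pow, Nat.add_sub_cancel' hk]

theorem add_pow_mul_mul {R : Type*} [CommSemiring R] (a₁ a₂ a₃ b₁ b₂ b₃ : R) (n : ℕ) :
    (a₁ * a₂ * a₃ + b₁ * b₂ * b₃) ^ n = ∑ k ∈ Finset.range (n + 1),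
      (a₁ ^ k * b₁ ^ (n - k)) * (a₂ ^ k * b₂ ^ (n - k)) * (a₃ ^ k * b₃ ^ (n - k)) *
        (n.choose k : R) := by
  rw [add_pow]
  refine Finset.sum_congr rfl fun k _ => ?_
  simp only [mul_pow]
  ring

theorem setIntegral_prod_prod_mul {α β γ : Type*} [MeasurableSpace α] [MeasurableSpace β]
    [MeasurableSpace γ] {μ : Measure α} {ν : Measure β} {ρ : Measure γ}
    [SFinite μ] [SFinite ν] [SFinite ρ]
    (f : α → ℝ) (g : β → ℝ) (h : γ → ℝ) (s : Set α) (t : Set β) (u : Set γ) :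
    ∫ p in s ×ˢ t ×ˢ u, f p.1 * g p.2.1 * h p.2.2 ∂μ.prod (ν.prod ρ) =
      (∫ x in s, f x ∂μ) * (∫ y in t, g y ∂ν) * ∫ z in u, h z ∂ρ := by
  simp_rw [mul_assoc]
  rw [setIntegral_prod_mul f (fun q : β × γ => g q.1 * h q.2), setIntegral_prod_mul]

theorem choose_mul_div_factorial_cube {k n : ℕ} (hk : k ≤ n) :
    (n.choose k : ℝ) * (k ! * (n - k)! / (n + 1)! : ℝ) ^ 3 =
      1 / ((n + 1) * ((n + 1)! : ℝ) ^ 2) * (((n - k)! : ℝ) ^ 2 * (k ! : ℝ) ^ 2) := by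
  have hchoose : (n.choose k : ℝ) * k ! * (n - k)! = n ! := by
    exact_mod_cast Nat.choose_mul_factorial_mul_factorial hk
  have hsucc : ((n + 1)! : ℝ) = (n + 1) * n ! := by
    exact_mod_cast Nat.factorial_succ n
  have hchoose_pos : (0 : ℝ) < n.choose k := by exact_mod_cast Nat.choose_pos hk
  rw [hsucc, ← hchoose]
  field_simp

/-- The `n`-th moment of `Q(r,s,t) = r·s·t + (1 − r)·(1 − s)·(1 − t)` over the
unit cube `[0,1]³` is `μₙ = (Σ_{k=0}^{n} ((n−k)!·k!)²) / ((n+1)·((n+1)!)²)`. -/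
theorem nth_moment_Q (n : ℕ) :
    ∫ p in Set.Icc (0:ℝ) 1 ×ˢ Set.Icc (0:ℝ) 1 ×ˢ Set.Icc (0:ℝ) 1,
      (p.1 * p.2.1 * p.2.2 + (1 - p.1) * (1 - p.2.1) * (1 - p.2.2)) ^ n =
    (1 / ((n + 1) * ((n + 1)! : ℝ) ^ 2)) *
      ∑ k ∈ Finset.range (n + 1), ((n - k)! : ℝ) ^ 2 * ((k)! : ℝ) ^ 2 := by
  have hcube : IsCompact (Set.Icc (0:ℝ) 1 ×ˢ Set.Icc (0:ℝ) 1 ×ˢ Set.Icc (0:ℝ) 1) :=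
    isCompact_Icc.prod (isCompact_Icc.prod isCompact_Icc)
  simp_rw [add_pow_mul_mul, Finset.mul_sum]
  rw [integral_finsetSum _ fun k _ =>
    (Continuous.continuousOn (by fun_prop)).integrableOn_compact hcube]
  refine Finset.sum_congr rfl fun k hk => ?_
  have hkn : k ≤ n := Nat.lt_succ_iff.mp (Finset.mem_range.mp hk)
  rw [integral_mul_const, Measure.volume_eq_prod, Measure.volume_eq_prod,
    setIntegral_prod_prod_mul (fun x => x ^ k * (1 - x) ^ (n - k))
      (fun x => x ^ k * (1 - x) ^ (n - k)) (fun x => x ^ k * (1 - x) ^ (n - k)),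
    setIntegral_Icc_pow_mul_one_sub_pow hkn, ← choose_mul_div_factorial_cube hkn]
  ring
end

section
/- For every real number c with 1/4 ≤ c ≤ 1, the Lebesgue measure (volume) of the set {(r,s,t) ∈ [0,1]³ : Q(r,s,t) ≤ c} equals c − (3c − 1/2)·ln c + (4c − 1)^{3/2}·(arctan(√(4c − 1)) − π/3). -/
/-!
Write `Q(r,s,t) = (1 - t)·(1 - r)(1 - s) + t·rs`, affine in `t`. Since
`rs·(1 - r)(1 - s) ≤ 1/16`, for `c ≥ 1/4` at most one of the two end values exceeds `c`, so the
`t`-section of `{Q ≤ c}` is an interval of length `1 - e(r,s) - e(1-r,1-s)` with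
`e(r,s) = (rs - c)⁺ / (r + s - 1)` (`excess`). The symmetry `(r,s) ↦ (1-r,1-s)` gives
`CDF(c) = 1 - 2 ∬ e`. For `r > c`, `∫ e(r,s) ds = r - c - q log (r² / q)` with `q = r² - r + c`,
and integrating this over `[c,1]` produces the logarithm and, since `q` has discriminant `1 - 4c`,
the arctangent. This settles `c > 1/4`; at `c = 1/4`, where `q` vanishes at `r = 1/2`, the formula
follows by right-continuity of the CDF.
-/

open MeasureTheory Real Set Filter Topology

noncomputable section

/-- For `x ≤ c < y`, the length of the final piece of `[0,1]` on which
`t ↦ (1 - t) x + t y` exceeds `c`. -/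
def overshoot (c x y : ℝ) : ℝ := if c < y then (y - c) / (y - x) else 0

lemma overshoot_of_le {c x y : ℝ} (hy : y ≤ c) : overshoot c x y = 0 := if_neg hy.not_gt

lemma overshoot_mem_Icc {c x y : ℝ} (h : x ≤ c ∨ y ≤ c) : overshoot c x y ∈ Icc 0 1 := by
  unfold overshoot
  split_ifs with hy
  · have hx : x ≤ c := h.resolve_right hy.not_ge
    have hxy : 0 < y - x := by linarith
    exact ⟨by positivity, (div_le_one hxy).2 (by linarith)⟩
  · simp

lemma one_sub_overshoot_sub_overshoot_nonneg {c x y : ℝ} (h : x ≤ c ∨ y ≤ c) :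
    0 ≤ 1 - overshoot c x y - overshoot c y x := by
  rcases h with hx | hy
  · linarith [overshoot_of_le (x := y) hx, (overshoot_mem_Icc (c := c) (y := y) (Or.inl hx)).2]
  · linarith [overshoot_of_le (x := x) hy, (overshoot_mem_Icc (c := c) (y := x) (Or.inl hy)).2]

lemma volume_setOf_affine_le {c x y : ℝ} (h : x ≤ c ∨ y ≤ c) :
    volume {t ∈ Icc (0 : ℝ) 1 | (1 - t) * x + t * y ≤ c} =
      ENNReal.ofReal (1 - overshoot c x y - overshoot c y x) := by
  rcases lt_or_ge c y with hy | hy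
  · have hx : x ≤ c := h.resolve_right hy.not_ge
    have hxy : 0 < y - x := by linarith
    have hset : {t ∈ Icc (0 : ℝ) 1 | (1 - t) * x + t * y ≤ c} = Icc 0 ((c - x) / (y - x)) := by
      ext t
      simp only [mem_ofPred_eq, mem_Icc, le_div_iff₀ hxy]
      constructor
      · rintro ⟨⟨ht0, -⟩, hQ⟩; exact ⟨ht0, by linarith⟩
      · rintro ⟨ht0, ht⟩; exact ⟨⟨ht0, by nlinarith⟩, by linarith⟩
    rw [hset, Real.volume_Icc, overshoot, if_pos hy, overshoot_of_le hx]
    congr 1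
    field_simp
    ring
  rcases lt_or_ge c x with hx | hx
  · have hxy : 0 < x - y := by linarith
    have hset : {t ∈ Icc (0 : ℝ) 1 | (1 - t) * x + t * y ≤ c} = Icc ((x - c) / (x - y)) 1 := by
      ext t
      simp only [mem_ofPred_eq, mem_Icc, div_le_iff₀ hxy]
      constructor
      · rintro ⟨⟨-, ht1⟩, hQ⟩; exact ⟨by linarith, ht1⟩
      · rintro ⟨ht, ht1⟩; exact ⟨⟨by nlinarith, ht1⟩, by linarith⟩
    rw [hset, Real.volume_Icc, overshoot_of_le hy, overshoot, if_pos hx]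
    congr 1
    field_simp
    ring
  · have hset : {t ∈ Icc (0 : ℝ) 1 | (1 - t) * x + t * y ≤ c} = Icc 0 1 :=
      sep_eq_self_iff_mem_true.2 fun t ⟨ht0, ht1⟩ => by nlinarith
    rw [hset, Real.volume_Icc, overshoot_of_le hy, overshoot_of_le hx]
    norm_num

lemma measurePreserving_one_sub_restrict_Icc :
    MeasurePreserving (fun x : ℝ => 1 - x) (volume.restrict (Icc 0 1))
      (volume.restrict (Icc 0 1)) := by
  have h := (volume.measurePreserving_sub_left (1 : ℝ)).restrict_preimage
    (measurableSet_Icc (a := 0) (b := 1))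
  rwa [preimage_const_sub_Icc, sub_zero, sub_self] at h

lemma measurableEmbedding_one_sub : MeasurableEmbedding (fun x : ℝ => 1 - x) :=
  (Homeomorph.subLeft (1 : ℝ)).measurableEmbedding

lemma setIntegral_Icc_comp_one_sub {E : Type*} [NormedAddCommGroup E] [NormedSpace ℝ E]
    (f : ℝ → E) : ∫ x in Icc 0 1, f (1 - x) = ∫ x in Icc 0 1, f x :=
  measurePreserving_one_sub_restrict_Icc.integral_comp measurableEmbedding_one_sub f

lemma MeasureTheory.IntegrableOn.comp_one_sub {E : Type*} [NormedAddCommGroup E] {f : ℝ → E}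
    (hf : IntegrableOn f (Icc 0 1)) : IntegrableOn (fun x => f (1 - x)) (Icc 0 1) :=
  (measurePreserving_one_sub_restrict_Icc.integrable_comp_emb measurableEmbedding_one_sub).2 hf

lemma MeasureTheory.Measure.prod_prod_apply_eq_lintegral {α β γ : Type*} [MeasurableSpace α]
    [MeasurableSpace β] [MeasurableSpace γ] (μ : Measure α) (ν : Measure β) (ρ : Measure γ)
    [SFinite ν] [SFinite ρ] {S : Set (α × β × γ)} (hS : MeasurableSet S) :
    μ.prod (ν.prod ρ) S = ∫⁻ x, ∫⁻ y, ρ {z | (x, y, z) ∈ S} ∂ν ∂μ := by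
  rw [Measure.prod_apply hS]
  refine lintegral_congr fun x => ?_
  rw [Measure.prod_apply (measurable_prodMk_left hS)]
  rfl

lemma tendsto_measure_setOf_le_nhdsGT {α : Type*} [MeasurableSpace α] {μ : Measure α}
    {s : Set α} (hs : MeasurableSet s) (hμs : μ s ≠ ⊤) {f : α → ℝ} (hf : Measurable f) (a : ℝ) :
    Tendsto (fun c => μ {x | x ∈ s ∧ f x ≤ c}) (𝓝[>] a) (𝓝 (μ {x | x ∈ s ∧ f x ≤ a})) := by
  have hinter : ⋂ c > a, {x | x ∈ s ∧ f x ≤ c} = {x | x ∈ s ∧ f x ≤ a} := by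
    ext x
    simp only [mem_iInter, mem_ofPred_eq]
    constructor
    · intro h
      exact ⟨(h (a + 1) (by linarith)).1, le_of_forall_gt_imp_ge_of_dense fun c hc => (h c hc).2⟩
    · rintro ⟨hx, hfx⟩ c hc
      exact ⟨hx, hfx.trans hc.le⟩
  rw [← hinter]
  exact tendsto_measure_biInter_gt
    (fun c _ => (hs.inter (measurableSet_le hf measurable_const)).nullMeasurableSet)
    (fun c d _ hcd x hx => ⟨hx.1, hx.2.trans hcd⟩)
    ⟨a + 1, by linarith, ne_top_of_le_ne_top hμs (measure_mono fun x hx => hx.1)⟩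

lemma arctan_sub_inv_div_two {w : ℝ} (hw : 0 < w) :
    arctan ((w - w⁻¹) / 2) = 2 * arctan w - π / 2 := by
  have h := arctan_add (x := w) (y := -w⁻¹) (by rw [mul_neg, mul_inv_cancel₀ hw.ne']; norm_num)
  rw [arctan_neg, arctan_inv_of_pos hw, mul_neg, mul_inv_cancel₀ hw.ne', sub_neg_eq_add,
    one_add_one_eq_two, ← sub_eq_add_neg (a := w)] at h
  linarith

lemma hasDerivAt_cubic (a b d r : ℝ) :
    HasDerivAt (fun r => a * r ^ 3 + b * r ^ 2 + d * r) (3 * a * r ^ 2 + 2 * b * r + d) r := by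
  refine ((((hasDerivAt_pow 3 r).const_mul a).add ((hasDerivAt_pow 2 r).const_mul b)).add
    ((hasDerivAt_id r).const_mul d)).congr_deriv ?_
  push_cast
  ring

def areaRatio (p : ℝ × ℝ × ℝ) : ℝ :=
  p.1 * p.2.1 * p.2.2 + (1 - p.1) * (1 - p.2.1) * (1 - p.2.2)

def sublevel (c : ℝ) : Set (ℝ × ℝ × ℝ) :=
  {p | p ∈ Icc (0 : ℝ) 1 ×ˢ Icc (0 : ℝ) 1 ×ˢ Icc (0 : ℝ) 1 ∧ areaRatio p ≤ c}

lemma measurable_areaRatio : Measurable areaRatio := by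
  unfold areaRatio
  fun_prop

lemma measurableSet_sublevel (c : ℝ) : MeasurableSet (sublevel c) :=
  (measurableSet_Icc.prod (measurableSet_Icc.prod measurableSet_Icc)).inter
    (measurableSet_le measurable_areaRatio measurable_const)

lemma slice_sublevel_eq_empty {c r s : ℝ} (h : ¬(r ∈ Icc (0 : ℝ) 1 ∧ s ∈ Icc (0 : ℝ) 1)) :
    {t | (r, s, t) ∈ sublevel c} = ∅ :=
  eq_empty_of_forall_notMem fun _ ht => h ⟨ht.1.1, ht.1.2.1⟩

lemma mul_le_quarter_or {r s : ℝ} (hr : r ∈ Icc (0 : ℝ) 1) (hs : s ∈ Icc (0 : ℝ) 1) :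
    (1 - r) * (1 - s) ≤ 1 / 4 ∨ r * s ≤ 1 / 4 := by
  obtain ⟨hr0, hr1⟩ := hr
  obtain ⟨hs0, hs1⟩ := hs
  by_contra! h
  have hr' : r * (1 - r) ≤ 1 / 4 := by nlinarith [sq_nonneg (r - 1 / 2)]
  have hs' : s * (1 - s) ≤ 1 / 4 := by nlinarith [sq_nonneg (s - 1 / 2)]
  nlinarith [mul_le_mul hr' hs' (by nlinarith) (by norm_num),
    mul_lt_mul'' h.1 h.2 (by norm_num) (by norm_num)]

def excess (c r s : ℝ) : ℝ := overshoot c ((1 - r) * (1 - s)) (r * s)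

def sliceLength (c r s : ℝ) : ℝ := 1 - excess c r s - excess c (1 - r) (1 - s)

lemma volume_slice_sublevel {c r s : ℝ} (hc : 1 / 4 ≤ c) (hr : r ∈ Icc (0 : ℝ) 1)
    (hs : s ∈ Icc (0 : ℝ) 1) :
    volume {t | (r, s, t) ∈ sublevel c} = ENNReal.ofReal (sliceLength c r s) := by
  have hslice : {t | (r, s, t) ∈ sublevel c} =
      {t ∈ Icc (0 : ℝ) 1 | (1 - t) * ((1 - r) * (1 - s)) + t * (r * s) ≤ c} := by
    ext t
    simp only [sublevel, areaRatio, mem_ofPred_eq, mem_prod, hr, hs, true_and]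
    ring_nf
  rw [hslice, volume_setOf_affine_le ((mul_le_quarter_or hr hs).imp (·.trans hc) (·.trans hc)),
    sliceLength, excess, excess, sub_sub_cancel, sub_sub_cancel]

lemma sliceLength_nonneg {c r s : ℝ} (hc : 1 / 4 ≤ c) (hr : r ∈ Icc (0 : ℝ) 1)
    (hs : s ∈ Icc (0 : ℝ) 1) : 0 ≤ sliceLength c r s := by
  have h := one_sub_overshoot_sub_overshoot_nonneg
    ((mul_le_quarter_or hr hs).imp (·.trans hc) (·.trans hc))
  rwa [sliceLength, excess, excess, sub_sub_cancel, sub_sub_cancel]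

lemma excess_eq_indicator (c r : ℝ) :
    excess c r = {s | c < r * s}.indicator fun s => (r * s - c) / (r + s - 1) := by
  ext s
  simp only [excess, overshoot, indicator, mem_ofPred_eq]
  ring_nf

lemma measurable_excess (c r : ℝ) : Measurable (excess c r) := by
  rw [excess_eq_indicator]
  exact Measurable.indicator (by fun_prop) (measurableSet_lt measurable_const (by fun_prop))

lemma integrableOn_excess {c r : ℝ} (hc : 1 / 4 ≤ c) (hr : r ∈ Icc (0 : ℝ) 1) :
    IntegrableOn (excess c r) (Icc 0 1) := by
  refine Measure.integrableOn_of_bounded (M := 1) (by simp)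
    (measurable_excess c r).aestronglyMeasurable
    (ae_restrict_of_forall_mem measurableSet_Icc fun s hs => ?_)
  obtain ⟨h0, h1⟩ := overshoot_mem_Icc (y := r * s)
    ((mul_le_quarter_or hr hs).imp (·.trans hc) (·.trans hc))
  rwa [excess, Real.norm_of_nonneg h0]

lemma integrableOn_sliceLength {c r : ℝ} (hc : 1 / 4 ≤ c) (hr : r ∈ Icc (0 : ℝ) 1) :
    IntegrableOn (sliceLength c r) (Icc 0 1) := by
  have hr' : 1 - r ∈ Icc (0 : ℝ) 1 := ⟨by linarith [hr.2], by linarith [hr.1]⟩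
  exact ((integrableOn_const (by simp)).sub (integrableOn_excess hc hr)).sub
    (integrableOn_excess hc hr').comp_one_sub

lemma sq_sub_add_pos {c : ℝ} (hc : 1 / 4 < c) (r : ℝ) : 0 < r ^ 2 - r + c := by
  nlinarith [sq_nonneg (r - 1 / 2)]

def excessAreaFormula (c r : ℝ) : ℝ :=
  r - c - (r ^ 2 - r + c) * (2 * log r - log (r ^ 2 - r + c))

def excessArea (c : ℝ) : ℝ → ℝ := (Ioi c).indicator (excessAreaFormula c)

lemma continuousOn_excessAreaFormula {c : ℝ} (hc : 1 / 4 < c) :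
    ContinuousOn (excessAreaFormula c) (Ioi 0) := by
  have hq := sq_sub_add_pos hc
  unfold excessAreaFormula
  fun_prop (disch := intro r hr; first | exact (hq r).ne' | exact (mem_Ioi.1 hr).ne')

lemma integral_mul_sub_div_add_sub_one {c r : ℝ} (hc : 1 / 4 < c) (hcr : c < r) :
    ∫ s in c / r..1, (r * s - c) / (r + s - 1) = excessAreaFormula c r := by
  have hr : 0 < r := by linarith
  have hq := sq_sub_add_pos hc r
  have hlow : c / r + (r - 1) = (r ^ 2 - r + c) / r := by field_simp; ring
  have hpos : ∀ s ∈ uIcc (c / r) 1, 0 < s + (r - 1) := by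
    intro s hs
    rw [uIcc_of_le ((div_le_one hr).2 hcr.le)] at hs
    have : 0 < c / r + (r - 1) := by rw [hlow]; positivity
    linarith [hs.1]
  calc ∫ s in c / r..1, (r * s - c) / (r + s - 1)
      = ∫ s in c / r..1, (r - (r ^ 2 - r + c) * (s + (r - 1))⁻¹) := by
        refine intervalIntegral.integral_congr fun s hs => ?_
        rw [show r + s - 1 = s + (r - 1) by ring]
        have := (hpos s hs).ne'
        field_simp
        ring
    _ = r * (1 - c / r) - (r ^ 2 - r + c) * log (r / (c / r + (r - 1))) := by
        rw [intervalIntegral.integral_sub intervalIntegrable_const,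
          intervalIntegral.integral_const_mul,
          intervalIntegral.integral_comp_add_right (fun x => x⁻¹), integral_inv_of_pos]
        · rw [intervalIntegral.integral_const, smul_eq_mul, add_sub_cancel]
          ring
        · exact hlow ▸ by positivity
        · linarith
        · exact (continuousOn_const.mul ((continuousOn_id.add continuousOn_const).inv₀
            fun s hs => (hpos s hs).ne')).intervalIntegrable
    _ = excessAreaFormula c r := by
        rw [hlow, div_div_eq_mul_div, ← sq, log_div (by positivity) hq.ne', log_pow,
          excessAreaFormula]
        field_simp
        push_cast
        ring

lemma setIntegral_excess {c r : ℝ} (hc : 1 / 4 < c) (hr : 0 ≤ r) :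
    ∫ s in Icc 0 1, excess c r s = excessArea c r := by
  rw [excess_eq_indicator, setIntegral_indicator (measurableSet_lt measurable_const (by fun_prop)),
    excessArea]
  by_cases hcr : c < r
  · have hr : 0 < r := by linarith
    have hset : Icc 0 1 ∩ {s | c < r * s} = Ioc (c / r) 1 := by
      ext s
      simp only [mem_inter_iff, mem_Icc, mem_ofPred_eq, mem_Ioc, div_lt_iff₀' hr]
      constructor
      · rintro ⟨⟨-, hs1⟩, hcs⟩; exact ⟨hcs, hs1⟩
      · rintro ⟨hcs, hs1⟩; exact ⟨⟨by nlinarith, hs1⟩, hcs⟩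
    rw [hset, ← intervalIntegral.integral_of_le ((div_le_one hr).2 hcr.le),
      integral_mul_sub_div_add_sub_one hc hcr, indicator_of_mem (mem_Ioi.2 hcr)]
  · have hset : Icc 0 1 ∩ {s | c < r * s} = ∅ :=
      eq_empty_of_forall_notMem fun s ⟨⟨hs0, hs1⟩, hcs⟩ => by
        simp only [mem_ofPred_eq] at hcs
        nlinarith
    rw [hset, Measure.restrict_empty, integral_zero_measure, indicator_of_notMem (s := Ioi c) hcr]

lemma integral_sliceLength {c r : ℝ} (hc : 1 / 4 < c) (hr : r ∈ Icc (0 : ℝ) 1) :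
    ∫ s in Icc 0 1, sliceLength c r s = 1 - excessArea c r - excessArea c (1 - r) := by
  have hr' : 1 - r ∈ Icc (0 : ℝ) 1 := ⟨by linarith [hr.2], by linarith [hr.1]⟩
  have h1 := integrableOn_excess hc.le hr
  have h2 := (integrableOn_excess hc.le hr').comp_one_sub
  simp only [sliceLength]
  rw [integral_sub (f := fun s => 1 - excess c r s) ((integrableOn_const (by simp)).sub h1) h2,
    integral_sub (f := fun _ => (1 : ℝ)) (integrableOn_const (by simp)) h1,
    setIntegral_Icc_comp_one_sub (excess c (1 - r)), setIntegral_excess hc hr.1,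
    setIntegral_excess hc hr'.1]
  simp

lemma integrableOn_excessArea {c : ℝ} (hc : 1 / 4 < c) :
    IntegrableOn (excessArea c) (Icc 0 1) := by
  refine (integrable_indicator_iff measurableSet_Ioi).2 ?_
  rw [IntegrableOn, Measure.restrict_restrict measurableSet_Ioi]
  refine (((continuousOn_excessAreaFormula hc).mono fun r hr => ?_).integrableOn_Icc
    (a := c) (b := 1)).mono_set fun r hr => ⟨hr.1.le, hr.2.2⟩
  exact lt_of_lt_of_le (by linarith) hr.1

lemma lintegral_volume_slice_sublevel {c r : ℝ} (hc : 1 / 4 < c) :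
    ∫⁻ s, volume {t | (r, s, t) ∈ sublevel c} =
      (Icc 0 1).indicator
        (fun r => ENNReal.ofReal (1 - excessArea c r - excessArea c (1 - r))) r := by
  by_cases hr : r ∈ Icc (0 : ℝ) 1
  · have hslice : (fun s => volume {t | (r, s, t) ∈ sublevel c}) =
        (Icc 0 1).indicator fun s => ENNReal.ofReal (sliceLength c r s) := by
      ext s
      by_cases hs : s ∈ Icc (0 : ℝ) 1
      · rw [indicator_of_mem hs, volume_slice_sublevel hc.le hr hs]
      · rw [indicator_of_notMem hs, slice_sublevel_eq_empty fun h => hs h.2, measure_empty]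
    rw [hslice, lintegral_indicator measurableSet_Icc, indicator_of_mem hr,
      ← ofReal_integral_eq_lintegral_ofReal (integrableOn_sliceLength hc.le hr)
        (ae_restrict_of_forall_mem measurableSet_Icc fun s hs => sliceLength_nonneg hc.le hr hs),
      integral_sliceLength hc hr]
  · simp_rw [slice_sublevel_eq_empty fun h => hr h.1, measure_empty, lintegral_zero,
      indicator_of_notMem hr]

lemma toReal_volume_sublevel_eq_integral {c : ℝ} (hc : 1 / 4 < c) :
    (volume (sublevel c)).toReal = 1 - 2 * ∫ r in Icc 0 1, excessArea c r := by
  have hA := integrableOn_excessArea hc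
  have hG : IntegrableOn (fun r => 1 - excessArea c r - excessArea c (1 - r)) (Icc 0 1) :=
    ((integrableOn_const (by simp)).sub hA).sub hA.comp_one_sub
  have hG0 : ∀ r ∈ Icc (0 : ℝ) 1, 0 ≤ 1 - excessArea c r - excessArea c (1 - r) := fun r hr =>
    integral_sliceLength hc hr ▸
      setIntegral_nonneg measurableSet_Icc fun s hs => sliceLength_nonneg hc.le hr hs
  have hvol : volume (sublevel c) =
      ENNReal.ofReal (∫ r in Icc 0 1, (1 - excessArea c r - excessArea c (1 - r))) := by
    calc volume (sublevel c) = ∫⁻ r, ∫⁻ s, volume {t | (r, s, t) ∈ sublevel c} :=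
          Measure.prod_prod_apply_eq_lintegral _ _ _ (measurableSet_sublevel c)
      _ = _ := by
          simp_rw [lintegral_volume_slice_sublevel hc]
          rw [lintegral_indicator measurableSet_Icc, ofReal_integral_eq_lintegral_ofReal hG
            (ae_restrict_of_forall_mem measurableSet_Icc hG0)]
  rw [hvol, ENNReal.toReal_ofReal (setIntegral_nonneg measurableSet_Icc hG0),
    integral_sub (f := fun r => 1 - excessArea c r) ((integrableOn_const (by simp)).sub hA)
      hA.comp_one_sub,
    integral_sub (f := fun _ => (1 : ℝ)) (integrableOn_const (by simp)) hA,
    setIntegral_Icc_comp_one_sub (excessArea c), setIntegral_const,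
    Real.volume_real_Icc_of_le zero_le_one]
  simp only [smul_eq_mul]
  ring

lemma setIntegral_excessArea {c : ℝ} (hc0 : 0 ≤ c) (hc1 : c ≤ 1) :
    ∫ r in Icc 0 1, excessArea c r = ∫ r in c..1, excessAreaFormula c r := by
  have hset : Icc 0 1 ∩ Ioi c = Ioc c 1 := by
    ext r
    simp only [mem_inter_iff, mem_Icc, mem_Ioi, mem_Ioc]
    constructor
    · rintro ⟨⟨-, hr1⟩, hcr⟩; exact ⟨hcr, hr1⟩
    · rintro ⟨hcr, hr1⟩; exact ⟨⟨by linarith, hr1⟩, hcr⟩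
  rw [excessArea, setIntegral_indicator measurableSet_Ioi, hset,
    intervalIntegral.integral_of_le hc1]

lemma hasDerivAt_primitive_quadratic_mul_log (c : ℝ) {r : ℝ} (hr : 0 < r) :
    HasDerivAt
      (fun r => (r ^ 3 / 3 - r ^ 2 / 2 + c * r) * log r - (r ^ 3 / 9 - r ^ 2 / 4 + c * r))
      ((r ^ 2 - r + c) * log r) r := by
  have hP := hasDerivAt_cubic (1 / 3) (-1 / 2) c r
  have hR := hasDerivAt_cubic (1 / 9) (-1 / 4) c r
  refine ((hP.mul (hasDerivAt_log hr.ne')).sub hR).congr_deriv ?_ |>.congr_of_eventuallyEq ?_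
  · field_simp
    ring
  · exact Eventually.of_forall fun r => by simp only [Pi.mul_apply, Pi.sub_apply]; ring

lemma hasDerivAt_primitive_quadratic_mul_log_quadratic {c w : ℝ} (hc : 1 / 4 < c)
    (hw : w ^ 2 = 4 * c - 1) (hw0 : 0 < w) (r : ℝ) :
    HasDerivAt (fun r => (r ^ 3 / 3 - r ^ 2 / 2 + c * r - (c - 1 / 6) / 2) * log (r ^ 2 - r + c)
        - (2 / 9 * r ^ 3 - 1 / 3 * r ^ 2 + (4 * c / 3 - 1 / 6) * r)
        + w ^ 3 / 6 * arctan ((2 * r - 1) / w))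
      ((r ^ 2 - r + c) * log (r ^ 2 - r + c)) r := by
  have hq := sq_sub_add_pos hc r
  have hq' : HasDerivAt (fun r => r ^ 2 - r + c) (2 * r - 1) r := by
    simpa using ((hasDerivAt_pow 2 r).sub (hasDerivAt_id r)).add_const c
  have hP := (hasDerivAt_cubic (1 / 3) (-1 / 2) c r).sub_const ((c - 1 / 6) / 2)
  have hR := hasDerivAt_cubic (2 / 9) (-1 / 3) (4 * c / 3 - 1 / 6) r
  have hA : HasDerivAt (fun r => arctan ((2 * r - 1) / w))
      (2 / w / (1 + ((2 * r - 1) / w) ^ 2)) r := by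
    simpa [div_eq_inv_mul] using
      (((hasDerivAt_id r).const_mul 2).sub_const 1).div_const w |>.arctan
  refine (((hP.mul (hq'.log hq.ne')).sub hR).add (hA.const_mul (w ^ 3 / 6))).congr_deriv ?_
    |>.congr_of_eventuallyEq ?_
  · have h4q : 1 + ((2 * r - 1) / w) ^ 2 = 4 * (r ^ 2 - r + c) / w ^ 2 := by
      field_simp
      rw [hw]
      ring
    have hw4 : w ^ 4 = (4 * c - 1) ^ 2 := by rw [← hw]; ring
    have hq0 : r * (r - 1) + c ≠ 0 := by nlinarith
    rw [h4q]
    field_simp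
    linear_combination 108 * hw4
  · exact Eventually.of_forall fun r => by
      simp only [Pi.mul_apply, Pi.sub_apply, Pi.add_apply]
      ring

lemma integral_excessAreaFormula {c : ℝ} (hc : 1 / 4 < c) (hc1 : c ≤ 1) :
    ∫ r in c..1, excessAreaFormula c r = 1 / 2 - c / 2 + 3 / 2 * (c - 1 / 6) * log c
      - (4 * c - 1) ^ ((3 : ℝ) / 2) / 2 * (arctan √(4 * c - 1) - π / 3) := by
  have hc0 : 0 < c := by linarith
  have h4c : 0 < 4 * c - 1 := by linarith
  set w := √(4 * c - 1)
  have hw0 : 0 < w := sqrt_pos.2 h4c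
  have hw : w ^ 2 = 4 * c - 1 := sq_sqrt h4c.le
  have hderiv : ∀ r ∈ uIcc c 1, HasDerivAt (fun r => r ^ 2 / 2 - c * r
      - 2 * ((r ^ 3 / 3 - r ^ 2 / 2 + c * r) * log r - (r ^ 3 / 9 - r ^ 2 / 4 + c * r))
      + ((r ^ 3 / 3 - r ^ 2 / 2 + c * r - (c - 1 / 6) / 2) * log (r ^ 2 - r + c)
        - (2 / 9 * r ^ 3 - 1 / 3 * r ^ 2 + (4 * c / 3 - 1 / 6) * r)
        + w ^ 3 / 6 * arctan ((2 * r - 1) / w))) (excessAreaFormula c r) r := by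
    intro r hr
    have hr0 : 0 < r := hc0.trans_le (uIcc_of_le hc1 ▸ hr).1
    have hpoly : HasDerivAt (fun r => r ^ 2 / 2 - c * r) (r - c) r := by
      refine (((hasDerivAt_pow 2 r).div_const 2).sub
        ((hasDerivAt_id r).const_mul c)).congr_deriv ?_
      push_cast
      ring
    refine ((hpoly.sub ((hasDerivAt_primitive_quadratic_mul_log c hr0).const_mul 2)).add
      (hasDerivAt_primitive_quadratic_mul_log_quadratic hc hw hw0 r)).congr_deriv ?_
    unfold excessAreaFormula
    ring
  have hint : IntervalIntegrable (excessAreaFormula c) volume c 1 :=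
    ((continuousOn_excessAreaFormula hc).mono fun r hr =>
      hc0.trans_le (uIcc_of_le hc1 ▸ hr).1).intervalIntegrable
  rw [intervalIntegral.integral_eq_sub_of_hasDerivAt hderiv hint]
  have h32 : (4 * c - 1) ^ ((3 : ℝ) / 2) = w ^ 3 := by
    rw [← hw, ← rpow_natCast, ← rpow_mul hw0.le]
    norm_num
  have harc1 : arctan ((2 * 1 - 1) / w) = π / 2 - arctan w := by
    rw [← arctan_inv_of_pos hw0]
    norm_num
  have harcc : arctan ((2 * c - 1) / w) = 2 * arctan w - π / 2 := by
    rw [← arctan_sub_inv_div_two hw0]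
    congr 1
    field_simp
    linear_combination -hw
  have hlogc : log (c ^ 2 - c + c) = 2 * log c := by
    rw [sub_add_cancel, log_pow]
    norm_num
  simp only [harc1, harcc, hlogc, h32, log_one]
  norm_num
  ring

def cdfFormula (c : ℝ) : ℝ :=
  c - (3 * c - 1 / 2) * log c + (4 * c - 1) ^ ((3 : ℝ) / 2) * (arctan √(4 * c - 1) - π / 3)

lemma toReal_volume_sublevel {c : ℝ} (hc : 1 / 4 < c) (hc1 : c ≤ 1) :
    (volume (sublevel c)).toReal = cdfFormula c := by
  rw [toReal_volume_sublevel_eq_integral hc, setIntegral_excessArea (by linarith) hc1,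
    integral_excessAreaFormula hc hc1, cdfFormula]
  ring

lemma tendsto_toReal_volume_sublevel (a : ℝ) :
    Tendsto (fun c => (volume (sublevel c)).toReal) (𝓝[>] a) (𝓝 (volume (sublevel a)).toReal) := by
  have hcube : volume (Icc (0 : ℝ) 1 ×ˢ Icc (0 : ℝ) 1 ×ˢ Icc (0 : ℝ) 1) ≠ ⊤ :=
    (isCompact_Icc.prod (isCompact_Icc.prod isCompact_Icc)).measure_lt_top.ne
  exact (ENNReal.tendsto_toReal (ne_top_of_le_ne_top hcube (measure_mono fun _ hp => hp.1))).comp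
    (tendsto_measure_setOf_le_nhdsGT
      (measurableSet_Icc.prod (measurableSet_Icc.prod measurableSet_Icc)) hcube
      measurable_areaRatio a)

lemma continuousAt_cdfFormula : ContinuousAt cdfFormula (1 / 4) := by
  unfold cdfFormula
  fun_prop (disch := norm_num)

end

/-- For `1/4 ≤ c ≤ 1`, the volume of
`{(r,s,t) ∈ [0,1]³ : r·s·t + (1−r)·(1−s)·(1−t) ≤ c}` is
`c − (3c − 1/2)·ln c + (4c − 1)^{3/2}·(arctan √(4c − 1) − π/3)`. -/
theorem cdf_right (c : ℝ) (hc0 : 1 / 4 ≤ c) (hc : c ≤ 1) :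
    (volume {p : ℝ × ℝ × ℝ | p ∈ Set.Icc (0:ℝ) 1 ×ˢ Set.Icc (0:ℝ) 1 ×ˢ Set.Icc (0:ℝ) 1 ∧
        p.1 * p.2.1 * p.2.2 + (1 - p.1) * (1 - p.2.1) * (1 - p.2.2) ≤ c}).toReal =
      c - (3 * c - 1 / 2) * Real.log c +
        (4 * c - 1) ^ ((3 : ℝ) / 2) * (Real.arctan (Real.sqrt (4 * c - 1)) - π / 3) := by
  change (volume (sublevel c)).toReal = cdfFormula c
  rcases hc0.lt_or_eq with hc0 | rfl
  · exact toReal_volume_sublevel hc0 hc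
  refine tendsto_nhds_unique (tendsto_toReal_volume_sublevel _)
    ((continuousAt_cdfFormula.tendsto.mono_left nhdsWithin_le_nhds).congr' ?_)
  filter_upwards [Ioc_mem_nhdsGT (by norm_num : (1 / 4 : ℝ) < 1)] with c hc
  exact (toReal_volume_sublevel hc.1 hc.2).symm
end

section
/- For every real number c with 1/4 < c < 1, the function G(c) = c − (3c − 1/2)·ln c + (4c − 1)^{3/2}·(arctan(√(4c − 1)) − π/3) has derivative at c equal to −3·ln c + 2·√(4c − 1)·(3·arctan(√(4c − 1)) − π). Consequently the probability density function of the area ratio Q on (1/4, 1) is PDF(c) = −3·ln c + 2·√(4c − 1)·(3·arctan(√(4c − 1)) − π). -/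
open Real

/-!
Put `u = 4c − 1` and `s = √u`. Differentiating the first two terms gives
`−2 − 3 ln c + 1/(2c)`, and differentiating `u^{3/2} (arctan s − π/3)` in `u` and multiplying by
`du/dc = 4` gives `6 s (arctan s − π/3) + 2 − 1/(2c)`, because `u^{3/2} = u s` and `1 + s² = 4c`.
The rational terms cancel, leaving `−3 ln c + 2 s (3 arctan s − π)`.
-/

lemma rpow_three_halves_eq_mul_sqrt {u : ℝ} (hu : 0 ≤ u) : u ^ ((3 : ℝ) / 2) = u * √u := by
  rw [show (3 : ℝ) / 2 = 1 + 1 / 2 by norm_num, rpow_add' hu (by norm_num), rpow_one,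
    sqrt_eq_rpow]

lemma hasDerivAt_sub_mul_log {x : ℝ} (hx : x ≠ 0) (a b : ℝ) :
    HasDerivAt (fun y : ℝ => y - (a * y - b) * log y) (1 - a * log x - (a * x - b) / x) x := by
  have hlin : HasDerivAt (fun y : ℝ => a * y - b) a x := by
    simpa using ((hasDerivAt_id x).const_mul a).sub_const b
  refine ((hasDerivAt_id x).sub (hlin.mul (hasDerivAt_log hx))).congr_deriv ?_
  field_simp
  ring

lemma hasDerivAt_rpow_three_halves_mul_arctan_sqrt {u : ℝ} (hu : 0 < u) (a : ℝ) :
    HasDerivAt (fun v : ℝ => v ^ ((3 : ℝ) / 2) * (arctan √v - a))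
      (3 / 2 * √u * (arctan √u - a) + u / (2 * (1 + u))) u := by
  have hpow : HasDerivAt (fun v : ℝ => v ^ ((3 : ℝ) / 2)) (3 / 2 * √u) u := by
    convert hasDerivAt_rpow_const (p := (3 : ℝ) / 2) (Or.inl hu.ne') using 1
    rw [sqrt_eq_rpow]
    norm_num
  refine (hpow.mul ((hasDerivAt_sqrt hu.ne').arctan.sub_const a)).congr_deriv ?_
  rw [sq_sqrt hu.le, rpow_three_halves_eq_mul_sqrt hu.le]
  field_simp

theorem pdf_right_general (c : ℝ) (hc0 : 1 / 4 < c) :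
    HasDerivAt (fun x : ℝ => x - (3 * x - 1 / 2) * Real.log x +
        (4 * x - 1) ^ ((3 : ℝ) / 2) * (Real.arctan (Real.sqrt (4 * x - 1)) - π / 3))
      (-3 * Real.log c +
        2 * Real.sqrt (4 * c - 1) * (3 * Real.arctan (Real.sqrt (4 * c - 1)) - π)) c := by
  have hc_pos : 0 < c := by linarith
  have hu : 0 < 4 * c - 1 := by linarith
  have hlin : HasDerivAt (fun x : ℝ => 4 * x - 1) 4 c := by
    simpa using ((hasDerivAt_id c).const_mul (4 : ℝ)).sub_const 1
  have hcdf := (hasDerivAt_sub_mul_log hc_pos.ne' 3 (1 / 2)).add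
    ((hasDerivAt_rpow_three_halves_mul_arctan_sqrt hu (π / 3)).comp c hlin)
  refine hcdf.congr_deriv ?_
  field_simp
  ring

/-- For `1/4 < c < 1`, the CDF branch
`G(c) = c − (3c − 1/2)·ln c + (4c − 1)^{3/2}·(arctan √(4c − 1) − π/3)` has derivative
`−3·ln c + 2·√(4c − 1)·(3·arctan √(4c − 1) − π)`; this is the PDF of the area ratio
on `(1/4, 1)`. -/
theorem pdf_right (c : ℝ) (hc0 : 1 / 4 < c) (hc : c < 1) :
    HasDerivAt (fun x : ℝ => x - (3 * x - 1 / 2) * Real.log x +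
        (4 * x - 1) ^ ((3 : ℝ) / 2) * (Real.arctan (Real.sqrt (4 * x - 1)) - π / 3))
      (-3 * Real.log c +
        2 * Real.sqrt (4 * c - 1) * (3 * Real.arctan (Real.sqrt (4 * c - 1)) - π)) c :=
  pdf_right_general c hc0
end

section
/- For every real number c with 1/4 < c < 1, the Lebesgue measure (volume) of the set {(r,s,t) ∈ [0,1]³ : Q(r,s,t) ≤ c} equals 1 − 2·∫_{t=c}^{1} ∫_{s=c/t}^{1} (1 − r(s,t,c)) ds dt, where r(s,t,c) = (c − 1 − s·t + s + t)/(s + t − 1). -/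
open MeasureTheory intervalIntegral

def cdfE (c : ℝ) : Set (ℝ × ℝ) :=
  {p | p.2 ∈ Set.Icc c 1 ∧ p.1 ∈ Set.Icc (c / p.2) 1}

noncomputable def cdfF (c : ℝ) : ℝ × ℝ → ℝ :=
  (cdfE c).indicator fun p => (p.1 * p.2 - c) / (p.1 + p.2 - 1)

lemma cdfE_facts {c : ℝ} (hc0 : 1 / 4 < c) {p : ℝ × ℝ} (hp : p ∈ cdfE c) :
    0 ≤ p.1 ∧ p.1 ≤ 1 ∧ 0 ≤ p.2 ∧ p.2 ≤ 1 ∧ c ≤ p.1 * p.2 ∧ 1 < p.1 + p.2 := by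
  obtain ⟨⟨ht1, ht2⟩, hs1, hs2⟩ := hp
  have htpos : 0 < p.2 := by linarith
  have hcs : c ≤ p.1 * p.2 := by
    rw [div_le_iff₀ htpos] at hs1; linarith
  have hspos : 0 < p.1 := by
    have : 0 < c / p.2 := div_pos (by linarith) htpos
    linarith
  refine ⟨le_of_lt hspos, hs2, le_of_lt htpos, ht2, hcs, ?_⟩
  nlinarith [sq_nonneg (p.1 - p.2), sq_nonneg (p.1 + p.2)]

lemma cdfE_facts' {c : ℝ} (hc0 : 1 / 4 < c) {a b : ℝ} (hp : (a, b) ∈ cdfE c) :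
    0 ≤ a ∧ a ≤ 1 ∧ 0 ≤ b ∧ b ≤ 1 ∧ c ≤ a * b ∧ 1 < a + b :=
  cdfE_facts hc0 hp

lemma cdf_slice {c : ℝ} (hc0 : 1 / 4 < c) (q : ℝ × ℝ) :
    volume {r : ℝ | (r, q) ∈ {p : ℝ × ℝ × ℝ |
        p ∈ Set.Icc (0:ℝ) 1 ×ˢ Set.Icc (0:ℝ) 1 ×ˢ Set.Icc (0:ℝ) 1 ∧
        c < p.1 * p.2.1 * p.2.2 + (1 - p.1) * (1 - p.2.1) * (1 - p.2.2)}} =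
      ENNReal.ofReal (cdfF c q + cdfF c (1 - q.1, 1 - q.2)) := by
  obtain ⟨s, t⟩ := q
  have hset : {r : ℝ | (r, (s, t)) ∈ {p : ℝ × ℝ × ℝ |
        p ∈ Set.Icc (0:ℝ) 1 ×ˢ Set.Icc (0:ℝ) 1 ×ˢ Set.Icc (0:ℝ) 1 ∧
        c < p.1 * p.2.1 * p.2.2 + (1 - p.1) * (1 - p.2.1) * (1 - p.2.2)}} =
      {r : ℝ | (0 ≤ r ∧ r ≤ 1) ∧ (0 ≤ s ∧ s ≤ 1) ∧ (0 ≤ t ∧ t ≤ 1) ∧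
        c - (1 - s) * (1 - t) < r * (s + t - 1)} := by
    ext r
    have key : r * s * t + (1 - r) * (1 - s) * (1 - t)
        = r * (s + t - 1) + (1 - s) * (1 - t) := by ring
    simp only [Set.mem_setOf_eq, Set.mem_prod, Set.mem_Icc, key]
    constructor
    · rintro ⟨⟨h1, h2, h3⟩, h4⟩; exact ⟨h1, h2, h3, by linarith⟩
    · rintro ⟨h1, h2, h3, h4⟩; exact ⟨⟨h1, h2, h3⟩, by linarith⟩
  rw [hset]
  by_cases hq : (0 ≤ s ∧ s ≤ 1) ∧ (0 ≤ t ∧ t ≤ 1)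
  · obtain ⟨⟨hs0, hs1⟩, ht0, ht1⟩ := hq
    set r0 : ℝ := (c - (1 - s) * (1 - t)) / (s + t - 1) with hr0def
    rcases lt_trichotomy (s + t) 1 with hd | hd | hd
    · -- s + t < 1
      have hd' : s + t - 1 < 0 := by linarith
      have hnotE : (s, t) ∉ cdfE c := fun h => by
        have h6 := (cdfE_facts' hc0 h).2.2.2.2.2; linarith
      have hr0le1 : r0 ≤ 1 := by
        rw [hr0def, div_le_iff_of_neg hd']
        nlinarith [sq_nonneg (s - t)]
      have hIco : {r : ℝ | (0 ≤ r ∧ r ≤ 1) ∧ (0 ≤ s ∧ s ≤ 1) ∧ (0 ≤ t ∧ t ≤ 1) ∧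
          c - (1 - s) * (1 - t) < r * (s + t - 1)} = Set.Ico 0 r0 := by
        ext r
        simp only [Set.mem_setOf_eq, Set.mem_Ico]
        constructor
        · rintro ⟨⟨h0, h1⟩, _, _, hlt⟩
          refine ⟨h0, ?_⟩
          rw [hr0def, lt_div_iff_of_neg hd']; linarith
        · rintro ⟨h0, hlt⟩
          have hlt' : c - (1 - s) * (1 - t) < r * (s + t - 1) := by
            rw [hr0def, lt_div_iff_of_neg hd'] at hlt; linarith
          exact ⟨⟨h0, le_trans hlt.le hr0le1⟩, ⟨hs0, hs1⟩, ⟨ht0, ht1⟩, hlt'⟩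
      rw [hIco, Real.volume_Ico, cdfF, Set.indicator_of_notMem hnotE]
      by_cases hk : c ≤ (1 - s) * (1 - t)
      · have ht1' : 0 < 1 - t := by nlinarith
        have hmem : ((1:ℝ) - s, (1:ℝ) - t) ∈ cdfE c :=
          ⟨⟨show c ≤ 1 - t by nlinarith, show (1:ℝ) - t ≤ 1 by linarith⟩,
            show c / (1 - t) ≤ 1 - s by rw [div_le_iff₀ ht1']; nlinarith,
            show (1:ℝ) - s ≤ 1 by linarith⟩
        rw [Set.indicator_of_mem hmem]
        congr 1
        have hne1 : s + t - 1 ≠ 0 := ne_of_lt hd'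
        have heq : ((1 - s) * (1 - t) - c) / (1 - s + (1 - t) - 1)
            = (c - (1 - s) * (1 - t)) / (s + t - 1) := by
          rw [div_eq_div_iff (by linarith) hne1]; ring
        show r0 - 0 = 0 + ((1 - s, 1 - t).1 * (1 - s, 1 - t).2 - c) /
          ((1 - s, 1 - t).1 + (1 - s, 1 - t).2 - 1)
        show r0 - 0 = 0 + ((1 - s) * (1 - t) - c) / (1 - s + (1 - t) - 1)
        rw [heq, hr0def]; ring
      · have hnotE2 : ((1:ℝ) - s, (1:ℝ) - t) ∉ cdfE c := fun h => by
          have h5 := (cdfE_facts' hc0 h).2.2.2.2.1; nlinarith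
        rw [Set.indicator_of_notMem hnotE2]
        have : r0 ≤ 0 := le_of_lt (div_neg_of_pos_of_neg (by linarith) hd')
        rw [show (0:ℝ) + 0 = 0 by ring, ENNReal.ofReal_zero, ENNReal.ofReal_eq_zero]
        linarith
    · -- s + t = 1
      have hempty : {r : ℝ | (0 ≤ r ∧ r ≤ 1) ∧ (0 ≤ s ∧ s ≤ 1) ∧ (0 ≤ t ∧ t ≤ 1) ∧
          c - (1 - s) * (1 - t) < r * (s + t - 1)} = ∅ := by
        ext r
        simp only [Set.mem_setOf_eq, Set.mem_empty_iff_false, iff_false]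
        rintro ⟨_, _, _, hlt⟩
        have h1 : s + t - 1 = 0 := by linarith
        rw [h1, mul_zero] at hlt
        nlinarith [sq_nonneg (s - t)]
      have hnotE : (s, t) ∉ cdfE c := fun h => by
        have h6 := (cdfE_facts' hc0 h).2.2.2.2.2; linarith
      have hnotE2 : ((1:ℝ) - s, (1:ℝ) - t) ∉ cdfE c := fun h => by
        have h6 := (cdfE_facts' hc0 h).2.2.2.2.2; linarith
      rw [hempty, cdfF, Set.indicator_of_notMem hnotE, Set.indicator_of_notMem hnotE2]
      simp
    · -- s + t > 1
      have hd' : (0:ℝ) < s + t - 1 := by linarith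
      have hknum : (1 - s) * (1 - t) ≤ 1 / 4 := by
        nlinarith [sq_nonneg (s - t), mul_nonneg (sub_nonneg.2 hs1) (sub_nonneg.2 ht1)]
      have hr0 : 0 ≤ r0 := div_nonneg (by linarith) (by linarith)
      have hIoc : {r : ℝ | (0 ≤ r ∧ r ≤ 1) ∧ (0 ≤ s ∧ s ≤ 1) ∧ (0 ≤ t ∧ t ≤ 1) ∧
          c - (1 - s) * (1 - t) < r * (s + t - 1)} = Set.Ioc r0 1 := by
        ext r
        simp only [Set.mem_setOf_eq, Set.mem_Ioc]
        constructor
        · rintro ⟨⟨h0, h1⟩, _, _, hlt⟩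
          refine ⟨?_, h1⟩
          rw [hr0def, div_lt_iff₀ hd']; linarith
        · rintro ⟨hlt, h1⟩
          have hlt' : c - (1 - s) * (1 - t) < r * (s + t - 1) := by
            rw [hr0def, div_lt_iff₀ hd'] at hlt; linarith
          exact ⟨⟨le_trans hr0 hlt.le, h1⟩, ⟨hs0, hs1⟩, ⟨ht0, ht1⟩, hlt'⟩
      have hnotE2 : ((1:ℝ) - s, (1:ℝ) - t) ∉ cdfE c := fun h => by
        have h6 := (cdfE_facts' hc0 h).2.2.2.2.2; linarith
      rw [hIoc, Real.volume_Ioc, cdfF, Set.indicator_of_notMem hnotE2]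
      by_cases hst : c ≤ s * t
      · have htpos : 0 < t := by nlinarith
        have hmem : (s, t) ∈ cdfE c :=
          ⟨⟨show c ≤ t by nlinarith, ht1⟩,
            show c / t ≤ s by rw [div_le_iff₀ htpos]; nlinarith, hs1⟩
        rw [Set.indicator_of_mem hmem]
        congr 1
        have hne1 : s + t - 1 ≠ 0 := ne_of_gt hd'
        show 1 - r0 = (s * t - c) / (s + t - 1) + 0
        rw [hr0def]
        field_simp
        ring
      · have hnotE : (s, t) ∉ cdfE c := fun h => by
          have h5 := (cdfE_facts' hc0 h).2.2.2.2.1; nlinarith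
        rw [Set.indicator_of_notMem hnotE]
        have hr0ge1 : 1 ≤ r0 := by
          rw [hr0def, le_div_iff₀ hd']; nlinarith
        rw [show (0:ℝ) + 0 = 0 by ring, ENNReal.ofReal_zero, ENNReal.ofReal_eq_zero]
        linarith
  · have hempty : {r : ℝ | (0 ≤ r ∧ r ≤ 1) ∧ (0 ≤ s ∧ s ≤ 1) ∧ (0 ≤ t ∧ t ≤ 1) ∧
        c - (1 - s) * (1 - t) < r * (s + t - 1)} = ∅ := by
      ext r
      simp only [Set.mem_setOf_eq, Set.mem_empty_iff_false, iff_false]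
      rintro ⟨_, h2, h3, _⟩
      exact hq ⟨h2, h3⟩
    have hnotE : (s, t) ∉ cdfE c := fun h => by
      obtain ⟨a, b, d, e, _, _⟩ := cdfE_facts' hc0 h
      exact hq ⟨⟨a, b⟩, d, e⟩
    have hnotE2 : ((1:ℝ) - s, (1:ℝ) - t) ∉ cdfE c := fun h => by
      obtain ⟨a, b, d, e, _, _⟩ := cdfE_facts' hc0 h
      exact hq ⟨⟨by linarith, by linarith⟩, by linarith, by linarith⟩
    rw [hempty, cdfF, Set.indicator_of_notMem hnotE, Set.indicator_of_notMem hnotE2]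
    simp

lemma measurableSet_cdfE (c : ℝ) : MeasurableSet (cdfE c) := by
  have h1 : MeasurableSet {p : ℝ × ℝ | p.2 ∈ Set.Icc c 1} :=
    measurable_snd measurableSet_Icc
  have h2 : MeasurableSet {p : ℝ × ℝ | c / p.2 ≤ p.1} :=
    measurableSet_le (measurable_const.div measurable_snd) measurable_fst
  have h3 : MeasurableSet {p : ℝ × ℝ | p.1 ≤ 1} :=
    measurableSet_le measurable_fst measurable_const
  have : cdfE c = {p : ℝ × ℝ | p.2 ∈ Set.Icc c 1} ∩
      ({p : ℝ × ℝ | c / p.2 ≤ p.1} ∩ {p : ℝ × ℝ | p.1 ≤ 1}) := by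
    ext p; simp [cdfE, Set.mem_Icc, and_assoc]
  rw [this]; exact h1.inter (h2.inter h3)

lemma cdfF_integrable {c : ℝ} (hc0 : 1 / 4 < c) : Integrable (cdfF c) := by
  rw [cdfF, integrable_indicator_iff (measurableSet_cdfE c)]
  have hsub : cdfE c ⊆ Set.Icc (0:ℝ) 1 ×ˢ Set.Icc (0:ℝ) 1 := by
    intro p hp
    obtain ⟨h1, h2, h3, h4, _, _⟩ := cdfE_facts hc0 hp
    exact ⟨⟨h1, h2⟩, ⟨h3, h4⟩⟩
  have hfin : volume (cdfE c) ≠ ⊤ :=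
    ((measure_mono hsub).trans_lt
      ((isCompact_Icc.prod isCompact_Icc).measure_lt_top)).ne
  apply Measure.integrableOn_of_bounded (M := 1) hfin
  · exact ((measurable_fst.mul measurable_snd).sub measurable_const).div
      ((measurable_fst.add measurable_snd).sub measurable_const)
      |>.aestronglyMeasurable
  · rw [ae_restrict_iff' (measurableSet_cdfE c)]
    filter_upwards with p hp
    obtain ⟨h1, h2, h3, h4, h5, h6⟩ := cdfE_facts hc0 hp
    have hden : 0 < p.1 + p.2 - 1 := by linarith
    have hnum : 0 ≤ p.1 * p.2 - c := by linarith
    rw [Real.norm_eq_abs, abs_of_nonneg (div_nonneg hnum hden.le)]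
    rw [div_le_one hden]
    nlinarith [sq_nonneg (p.1 - p.2), sq_nonneg (p.1 + p.2 - 2), mul_nonneg (sub_nonneg.2 h2) (sub_nonneg.2 h4)]

lemma cdfF_nonneg {c : ℝ} (hc0 : 1 / 4 < c) (p : ℝ × ℝ) : 0 ≤ cdfF c p := by
  rw [cdfF]
  apply Set.indicator_nonneg
  intro q hq
  obtain ⟨_, _, _, _, h5, h6⟩ := cdfE_facts hc0 hq
  exact div_nonneg (by linarith) (by linarith)

/-- For `1/4 < c < 1`, the volume of
`{(r,s,t) ∈ [0,1]³ : r·s·t + (1−r)·(1−s)·(1−t) ≤ c}` equals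
`1 − 2·∫_{t=c}^{1} ∫_{s=c/t}^{1} (1 − r(s,t,c)) ds dt` where
`r(s,t,c) = (c − 1 − s·t + s + t)/(s + t − 1)`. -/
theorem cdf_as_iterated_integral (c : ℝ) (hc0 : 1 / 4 < c) (hc : c < 1) :
    (volume {p : ℝ × ℝ × ℝ | p ∈ Set.Icc (0:ℝ) 1 ×ˢ Set.Icc (0:ℝ) 1 ×ˢ Set.Icc (0:ℝ) 1 ∧
        p.1 * p.2.1 * p.2.2 + (1 - p.1) * (1 - p.2.1) * (1 - p.2.2) ≤ c}).toReal =
      1 - 2 * ∫ t in c..1, ∫ s in (c / t)..1,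
        (1 - (c - 1 - s * t + s + t) / (s + t - 1)) := by
  classical
  set A : Set (ℝ × ℝ × ℝ) :=
    {p : ℝ × ℝ × ℝ | p ∈ Set.Icc (0:ℝ) 1 ×ˢ Set.Icc (0:ℝ) 1 ×ˢ Set.Icc (0:ℝ) 1 ∧
      p.1 * p.2.1 * p.2.2 + (1 - p.1) * (1 - p.2.1) * (1 - p.2.2) ≤ c} with hA
  set B : Set (ℝ × ℝ × ℝ) :=
    {p : ℝ × ℝ × ℝ | p ∈ Set.Icc (0:ℝ) 1 ×ˢ Set.Icc (0:ℝ) 1 ×ˢ Set.Icc (0:ℝ) 1 ∧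
      c < p.1 * p.2.1 * p.2.2 + (1 - p.1) * (1 - p.2.1) * (1 - p.2.2)} with hB
  have hQm : Measurable fun p : ℝ × ℝ × ℝ =>
      p.1 * p.2.1 * p.2.2 + (1 - p.1) * (1 - p.2.1) * (1 - p.2.2) :=
    ((measurable_fst.mul measurable_snd.fst).mul measurable_snd.snd).add
      (((measurable_const.sub measurable_fst).mul
        (measurable_const.sub measurable_snd.fst)).mul
        (measurable_const.sub measurable_snd.snd))
  have hcube : MeasurableSet (Set.Icc (0:ℝ) 1 ×ˢ Set.Icc (0:ℝ) 1 ×ˢ Set.Icc (0:ℝ) 1) :=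
    measurableSet_Icc.prod (measurableSet_Icc.prod measurableSet_Icc)
  have hmA : MeasurableSet A := by
    have : A = (Set.Icc (0:ℝ) 1 ×ˢ Set.Icc (0:ℝ) 1 ×ˢ Set.Icc (0:ℝ) 1) ∩
        {p : ℝ × ℝ × ℝ | p.1 * p.2.1 * p.2.2 + (1 - p.1) * (1 - p.2.1) * (1 - p.2.2) ≤ c} := by
      ext p; simp [hA, Set.mem_inter_iff, Set.mem_setOf_eq]
    rw [this]
    exact hcube.inter (measurableSet_le hQm measurable_const)
  have hmB : MeasurableSet B := by
    have : B = (Set.Icc (0:ℝ) 1 ×ˢ Set.Icc (0:ℝ) 1 ×ˢ Set.Icc (0:ℝ) 1) ∩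
        {p : ℝ × ℝ × ℝ | c < p.1 * p.2.1 * p.2.2 + (1 - p.1) * (1 - p.2.1) * (1 - p.2.2)} := by
      ext p; simp [hB, Set.mem_inter_iff, Set.mem_setOf_eq]
    rw [this]
    exact hcube.inter (measurableSet_lt measurable_const hQm)
  have huni : A ∪ B = Set.Icc (0:ℝ) 1 ×ˢ Set.Icc (0:ℝ) 1 ×ˢ Set.Icc (0:ℝ) 1 := by
    ext p
    simp only [hA, hB, Set.mem_union, Set.mem_setOf_eq]
    constructor
    · rintro (⟨h, _⟩ | ⟨h, _⟩) <;> exact h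
    · intro h
      rcases le_or_gt (p.1 * p.2.1 * p.2.2 + (1 - p.1) * (1 - p.2.1) * (1 - p.2.2)) c with h' | h'
      · exact Or.inl ⟨h, h'⟩
      · exact Or.inr ⟨h, h'⟩
  have hdisj : Disjoint A B := by
    rw [Set.disjoint_left]
    rintro p ⟨_, h1⟩ ⟨_, h2⟩
    exact absurd h1 (not_le.2 h2)
  have hvolcube : volume (Set.Icc (0:ℝ) 1 ×ˢ Set.Icc (0:ℝ) 1 ×ˢ Set.Icc (0:ℝ) 1) = 1 := by
    rw [Measure.volume_eq_prod, Measure.prod_prod, Measure.volume_eq_prod,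
      Measure.prod_prod, Real.volume_Icc]
    norm_num
  have key1 : volume A + volume B = 1 := by
    rw [← measure_union hdisj hmB, huni, hvolcube]
  have hAfin : volume A ≠ ⊤ := by
    intro h; rw [h] at key1; simp at key1
  have hBfin : volume B ≠ ⊤ := by
    intro h; rw [h] at key1; simp at key1
  have key2 : (volume A).toReal + (volume B).toReal = 1 := by
    rw [← ENNReal.toReal_add hAfin hBfin, key1, ENNReal.toReal_one]
  -- measure-preserving involution
  have hmp1 : MeasurePreserving (fun x : ℝ => 1 - x) volume volume :=
    Measure.measurePreserving_sub_left volume 1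
  have hσm : Measurable (fun q : ℝ × ℝ => ((1:ℝ) - q.1, (1:ℝ) - q.2)) :=
    (measurable_const.sub measurable_fst).prodMk (measurable_const.sub measurable_snd)
  have hmp : MeasurePreserving (fun q : ℝ × ℝ => ((1:ℝ) - q.1, (1:ℝ) - q.2)) volume volume := by
    rw [Measure.volume_eq_prod]
    exact hmp1.prod hmp1
  have hinv : Function.Involutive (fun q : ℝ × ℝ => ((1:ℝ) - q.1, (1:ℝ) - q.2)) := by
    intro q; simp
  have hemb : MeasurableEmbedding (fun q : ℝ × ℝ => ((1:ℝ) - q.1, (1:ℝ) - q.2)) := by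
    exact MeasurableEquiv.measurableEmbedding
      { toEquiv := hinv.toPerm _
        measurable_toFun := hσm
        measurable_invFun := hσm }
  have hcomp : Integrable (fun q : ℝ × ℝ => cdfF c (1 - q.1, 1 - q.2)) :=
    (hmp.integrable_comp_emb hemb).2 (cdfF_integrable hc0)
  have hint : Integrable (fun q : ℝ × ℝ => cdfF c q + cdfF c (1 - q.1, 1 - q.2)) :=
    (cdfF_integrable hc0).add hcomp
  have hnn : 0 ≤ᵐ[volume] fun q : ℝ × ℝ => cdfF c q + cdfF c (1 - q.1, 1 - q.2) :=
    Filter.Eventually.of_forall fun q =>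
      add_nonneg (cdfF_nonneg hc0 q) (cdfF_nonneg hc0 _)
  have hBvol : volume B = ENNReal.ofReal
      (∫ q : ℝ × ℝ, (cdfF c q + cdfF c (1 - q.1, 1 - q.2))) := by
    rw [hB, Measure.volume_eq_prod, Measure.prod_apply_symm hmB,
      ofReal_integral_eq_lintegral_ofReal hint hnn]
    exact lintegral_congr fun q => cdf_slice hc0 q
  have hsym : ∫ q : ℝ × ℝ, cdfF c (1 - q.1, 1 - q.2) = ∫ q : ℝ × ℝ, cdfF c q :=
    hmp.integral_comp hemb (cdfF c)
  have hBtoReal : (volume B).toReal = 2 * ∫ q : ℝ × ℝ, cdfF c q := by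
    rw [hBvol, ENNReal.toReal_ofReal (integral_nonneg fun q =>
      add_nonneg (cdfF_nonneg hc0 q) (cdfF_nonneg hc0 _)),
      integral_add (cdfF_integrable hc0) hcomp, hsym]
    ring
  -- Fubini and reduction to iterated interval integrals
  have hfub : ∫ q : ℝ × ℝ, cdfF c q = ∫ t : ℝ, ∫ s : ℝ, cdfF c (s, t) := by
    have hi := cdfF_integrable (c := c) hc0
    rw [Measure.volume_eq_prod] at hi ⊢
    exact integral_prod_symm _ hi
  have hinner : ∀ t : ℝ, (∫ s : ℝ, cdfF c (s, t)) =
      Set.indicator (Set.Icc c 1)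
        (fun t' => ∫ s in (c / t')..1, (s * t' - c) / (s + t' - 1)) t := by
    intro t
    by_cases ht : t ∈ Set.Icc c 1
    · rw [Set.indicator_of_mem ht]
      have htpos : (0:ℝ) < t := lt_of_lt_of_le (by linarith) ht.1
      have hct : c / t ≤ 1 := by rw [div_le_one htpos]; exact ht.1
      have heq : (fun s => cdfF c (s, t)) =
          Set.indicator (Set.Icc (c / t) 1) (fun s => (s * t - c) / (s + t - 1)) := by
        funext s
        by_cases hs : s ∈ Set.Icc (c / t) 1
        · rw [Set.indicator_of_mem hs, cdfF,
            Set.indicator_of_mem (show (s, t) ∈ cdfE c from ⟨ht, hs⟩)]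
        · rw [Set.indicator_of_notMem hs, cdfF,
            Set.indicator_of_notMem (fun hmem => hs hmem.2)]
      rw [heq, MeasureTheory.integral_indicator measurableSet_Icc, integral_Icc_eq_integral_Ioc,
        ← intervalIntegral.integral_of_le hct]
    · rw [Set.indicator_of_notMem ht]
      have heq : (fun s => cdfF c (s, t)) = fun _ => (0:ℝ) :=
        funext fun s => Set.indicator_of_notMem (fun hmem => ht hmem.1) _
      rw [heq, MeasureTheory.integral_zero]
  have houter : ∫ q : ℝ × ℝ, cdfF c q =
      ∫ t in c..1, ∫ s in (c / t)..1, (s * t - c) / (s + t - 1) := by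
    rw [hfub]
    simp_rw [hinner]
    rw [MeasureTheory.integral_indicator measurableSet_Icc, integral_Icc_eq_integral_Ioc,
      ← intervalIntegral.integral_of_le hc.le]
  have hcongr : (∫ t in c..1, ∫ s in (c / t)..1, (s * t - c) / (s + t - 1)) =
      ∫ t in c..1, ∫ s in (c / t)..1, (1 - (c - 1 - s * t + s + t) / (s + t - 1)) := by
    apply intervalIntegral.integral_congr
    intro t ht
    rw [Set.uIcc_of_le hc.le] at ht
    have htpos : (0:ℝ) < t := lt_of_lt_of_le (by linarith) ht.1
    have hct : c / t ≤ 1 := by rw [div_le_one htpos]; exact ht.1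
    apply intervalIntegral.integral_congr
    intro s hs
    rw [Set.uIcc_of_le hct] at hs
    have hst : c ≤ s * t := by
      have := hs.1; rw [div_le_iff₀ htpos] at this; linarith
    have hs0 : 0 < s := lt_of_lt_of_le (div_pos (by linarith) htpos) hs.1
    have hd : 0 < s + t - 1 := by
      nlinarith [sq_nonneg (s - t), sq_nonneg (s + t)]
    have hne : s + t - 1 ≠ 0 := ne_of_gt hd
    field_simp
    ring
  have hfinal : (volume B).toReal =
      2 * ∫ t in c..1, ∫ s in (c / t)..1, (1 - (c - 1 - s * t + s + t) / (s + t - 1)) := by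
    rw [hBtoReal, houter, hcongr]
  linarith [key2, hfinal]
end

section
/- For every real number c with 1/4 < c < 1, 1 − 2·∫_{t=c}^{1} ∫_{s=c/t}^{1} (1 − (c − 1 − s·t + s + t)/(s + t − 1)) ds dt = c − (3c − 1/2)·ln c − ((4c − 1)^{3/2}/3)·(arctan(1/√(4c − 1)) − arctan((2c − 1)/√(4c − 1))). -/
/-!
Writing `q(t) = t² - t + c`, the inner integrand is `t - q(t) / (s + t - 1)`, and the lower limit
`s = c / t` gives `s + t - 1 = q(t) / t > 0`, so the inner integral is
`(t - c) - q(t) (2 log t - log q(t))`. Since `c > 1/4`, `q` has no real roots and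
`4 q(t) = (2t - 1)² + r²` with `r = √(4c - 1)`. Integrating `q log t` and `q log q` by parts,
the rational term `(polynomial) · (2t - 1) / q` left over from `q log q` contributes
`r³/6 · arctan ((2t - 1) / r)`, which produces the arctangent difference.
-/

open Real intervalIntegral

lemma add_pos_of_mem_uIcc {a b d s : ℝ} (ha : 0 < a + d) (hb : 0 < b + d)
    (hs : s ∈ Set.uIcc a b) : 0 < s + d := by
  rcases Set.mem_uIcc.1 hs with h | h <;> linarith [h.1]

lemma integral_sub_div_add {a b d k m : ℝ} (ha : 0 < a + d) (hb : 0 < b + d) :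
    ∫ s in a..b, (k - m / (s + d)) = k * (b - a) - m * (log (b + d) - log (a + d)) := by
  have hpos := fun s (hs : s ∈ Set.uIcc a b) => add_pos_of_mem_uIcc ha hb hs
  have hderiv : ∀ s ∈ Set.uIcc a b,
      HasDerivAt (fun s => k * s - m * log (s + d)) (k - m / (s + d)) s := by
    intro s hs
    refine (((hasDerivAt_id' s).const_mul k).sub
      ((((hasDerivAt_id' s).add_const d).log (hpos s hs).ne').const_mul m)).congr_deriv ?_
    ring
  have hcont : ContinuousOn (fun s => k - m / (s + d)) (Set.uIcc a b) :=
    continuousOn_const.sub (continuousOn_const.div (by fun_prop) fun s hs => (hpos s hs).ne')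
  rw [integral_eq_sub_of_hasDerivAt hderiv hcont.intervalIntegrable]
  ring

lemma sq_sub_self_add_pos {c : ℝ} (hc : 1 / 4 < c) (t : ℝ) : 0 < t ^ 2 - t + c := by
  nlinarith [sq_nonneg (2 * t - 1)]

lemma inner_integral_eq {c t : ℝ} (hc : 1 / 4 < c) (ht : 0 < t) :
    ∫ s in (c / t)..1, (1 - (c - 1 - s * t + s + t) / (s + t - 1)) =
      (t - c) - (t ^ 2 - t + c) * (2 * log t - log (t ^ 2 - t + c)) := by
  have hq := sq_sub_self_add_pos hc t
  have hlower : c / t + (t - 1) = (t ^ 2 - t + c) / t := by field_simp; ring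
  have hupper : (0 : ℝ) < 1 + (t - 1) := by linarith
  have hlower_pos : 0 < c / t + (t - 1) := hlower ▸ div_pos hq ht
  have hintegrand : Set.EqOn (fun s => 1 - (c - 1 - s * t + s + t) / (s + t - 1))
      (fun s => t - (t ^ 2 - t + c) / (s + (t - 1))) (Set.uIcc (c / t) 1) := by
    intro s hs
    have := (add_pos_of_mem_uIcc hlower_pos hupper hs).ne'
    simp only [← add_sub_assoc] at this ⊢
    field_simp
    ring
  rw [integral_congr hintegrand, integral_sub_div_add hlower_pos hupper, hlower,
    log_div hq.ne' ht.ne', add_sub_cancel]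
  field_simp
  ring

lemma hasDerivAt_cubic_mul_log (c : ℝ) {t : ℝ} (ht : 0 < t) :
    HasDerivAt (fun t => (t ^ 3 / 3 - t ^ 2 / 2 + c * t) * log t - (t ^ 3 / 9 - t ^ 2 / 4 + c * t))
      ((t ^ 2 - t + c) * log t) t := by
  have hP : HasDerivAt (fun t : ℝ => t ^ 3 / 3 - t ^ 2 / 2 + c * t) (t ^ 2 - t + c) t := by
    exact ((((hasDerivAt_pow 3 t).div_const 3).sub ((hasDerivAt_pow 2 t).div_const 2)).add
      ((hasDerivAt_id' t).const_mul c)).congr_deriv (by ring)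
  have hQ : HasDerivAt (fun t : ℝ => t ^ 3 / 9 - t ^ 2 / 4 + c * t)
      (t ^ 2 / 3 - t / 2 + c) t := by
    exact ((((hasDerivAt_pow 3 t).div_const 9).sub ((hasDerivAt_pow 2 t).div_const 4)).add
      ((hasDerivAt_id' t).const_mul c)).congr_deriv (by ring)
  refine ((hP.mul (hasDerivAt_log ht.ne')).sub hQ).congr_deriv ?_
  field_simp
  ring

lemma hasDerivAt_arctan_two_mul_sub_one_div {r : ℝ} (hr : r ≠ 0) (t : ℝ) :
    HasDerivAt (fun t => arctan ((2 * t - 1) / r)) (2 * r / ((2 * t - 1) ^ 2 + r ^ 2)) t := by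
  have hlin : HasDerivAt (fun t : ℝ => (2 * t - 1) / r) (2 / r) t :=
    (((hasDerivAt_id' t).const_mul 2).sub_const 1).div_const r |>.congr_deriv (by ring)
  refine hlin.arctan.congr_deriv ?_
  have : (2 * t - 1) ^ 2 + r ^ 2 ≠ 0 := by positivity
  field_simp
  ring

lemma hasDerivAt_quadratic_mul_log_quadratic {c r : ℝ} (hr : r ≠ 0) (hr2 : r ^ 2 = 4 * c - 1)
    (t : ℝ) :
    HasDerivAt (fun t => (t ^ 3 / 3 - t ^ 2 / 2 + c * t - c / 2 + 1 / 12) * log (t ^ 2 - t + c)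
        - (2 * t ^ 3 / 9 - t ^ 2 / 3 + (4 * c / 3 - 1 / 6) * t)
        + r ^ 3 / 6 * arctan ((2 * t - 1) / r))
      ((t ^ 2 - t + c) * log (t ^ 2 - t + c)) t := by
  have hq : 4 * (t ^ 2 - t + c) = (2 * t - 1) ^ 2 + r ^ 2 := by rw [hr2]; ring
  have hq0 : t ^ 2 - t + c ≠ 0 := by
    have : 0 < (2 * t - 1) ^ 2 + r ^ 2 := by positivity
    linarith
  have hP : HasDerivAt (fun t : ℝ => t ^ 3 / 3 - t ^ 2 / 2 + c * t - c / 2 + 1 / 12)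
      (t ^ 2 - t + c) t := by
    exact (((((hasDerivAt_pow 3 t).div_const 3).sub ((hasDerivAt_pow 2 t).div_const 2)).add
      ((hasDerivAt_id' t).const_mul c)).sub_const (c / 2)).add_const (1 / 12) |>.congr_deriv
      (by ring)
  have hq' : HasDerivAt (fun t : ℝ => t ^ 2 - t + c) (2 * t - 1) t :=
    ((hasDerivAt_pow 2 t).sub (hasDerivAt_id' t)).add_const c |>.congr_deriv (by ring)
  have hR : HasDerivAt (fun t : ℝ => 2 * t ^ 3 / 9 - t ^ 2 / 3 + (4 * c / 3 - 1 / 6) * t)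
      (2 * t ^ 2 / 3 - 2 * t / 3 + (4 * c / 3 - 1 / 6)) t := by
    exact ((((hasDerivAt_pow 3 t).const_mul 2).div_const 9).sub
      ((hasDerivAt_pow 2 t).div_const 3)).add ((hasDerivAt_id' t).const_mul (4 * c / 3 - 1 / 6))
      |>.congr_deriv (by ring)
  refine (((hP.mul (hq'.log hq0)).sub hR).add
    ((hasDerivAt_arctan_two_mul_sub_one_div hr t).const_mul (r ^ 3 / 6))).congr_deriv ?_
  have hr4 : r ^ 4 = (4 * c - 1) ^ 2 := by rw [← hr2]; ring
  rw [← hq]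
  set q := t ^ 2 - t + c with hq_def
  field_simp
  rw [hr4, hq_def]
  ring

lemma hasDerivAt_outer_primitive {c r : ℝ} (hr : r ≠ 0) (hr2 : r ^ 2 = 4 * c - 1)
    {t : ℝ} (ht : 0 < t) :
    HasDerivAt (fun t => t ^ 2 / 2 - c * t
        - 2 * ((t ^ 3 / 3 - t ^ 2 / 2 + c * t) * log t - (t ^ 3 / 9 - t ^ 2 / 4 + c * t))
        + ((t ^ 3 / 3 - t ^ 2 / 2 + c * t - c / 2 + 1 / 12) * log (t ^ 2 - t + c)
          - (2 * t ^ 3 / 9 - t ^ 2 / 3 + (4 * c / 3 - 1 / 6) * t)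
          + r ^ 3 / 6 * arctan ((2 * t - 1) / r)))
      ((t - c) - (t ^ 2 - t + c) * (2 * log t - log (t ^ 2 - t + c))) t := by
  refine ((((hasDerivAt_pow 2 t).div_const 2).sub ((hasDerivAt_id' t).const_mul c)).sub
    ((hasDerivAt_cubic_mul_log c ht).const_mul 2)).add
    (hasDerivAt_quadratic_mul_log_quadratic hr hr2 t) |>.congr_deriv ?_
  ring

theorem iterated_integral_closed_form_general (c : ℝ) (hc0 : 1 / 4 < c) :
    1 - 2 * (∫ t in c..1, ∫ s in (c / t)..1,
        (1 - (c - 1 - s * t + s + t) / (s + t - 1))) =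
      c - (3 * c - 1 / 2) * Real.log c -
        ((4 * c - 1) ^ ((3 : ℝ) / 2) / 3) *
          (Real.arctan (1 / Real.sqrt (4 * c - 1)) -
            Real.arctan ((2 * c - 1) / Real.sqrt (4 * c - 1))) := by
  have hpos : ∀ t ∈ Set.uIcc c 1, 0 < t := fun t ht =>
    (lt_min (by linarith) one_pos).trans_le ht.1
  set r := √(4 * c - 1)
  have hr : 0 < r := sqrt_pos.2 (by linarith)
  have hr2 : r ^ 2 = 4 * c - 1 := sq_sqrt (by linarith)
  have hr3 : (4 * c - 1) ^ ((3 : ℝ) / 2) = r ^ 3 := by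
    rw [← hr2, ← rpow_natCast, ← rpow_mul hr.le]
    norm_num
  have hcont : ContinuousOn
      (fun t => (t - c) - (t ^ 2 - t + c) * (2 * log t - log (t ^ 2 - t + c))) (Set.uIcc c 1) := by
    fun_prop (disch := first
      | exact fun t ht => (hpos t ht).ne'
      | exact fun t _ => (sq_sub_self_add_pos hc0 t).ne')
  rw [integral_congr fun t ht => inner_integral_eq hc0 (hpos t ht),
    integral_eq_sub_of_hasDerivAt (fun t ht => hasDerivAt_outer_primitive hr.ne' hr2 (hpos t ht))
      hcont.intervalIntegrable, hr3,
    show (1 : ℝ) ^ 2 - 1 + c = c by ring, show c ^ 2 - c + c = c ^ 2 by ring, log_pow,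
    show (2 : ℝ) * 1 - 1 = 1 by ring, log_one]
  push_cast
  ring

/-- For `1/4 < c < 1`,
`1 − 2·∫_{t=c}^{1} ∫_{s=c/t}^{1} (1 − (c − 1 − s·t + s + t)/(s + t − 1)) ds dt
  = c − (3c − 1/2)·ln c − ((4c − 1)^{3/2}/3)·(arctan(1/√(4c−1)) − arctan((2c−1)/√(4c−1)))`. -/
theorem iterated_integral_closed_form (c : ℝ) (hc0 : 1 / 4 < c) (hc : c < 1) :
    1 - 2 * (∫ t in c..1, ∫ s in (c / t)..1,
        (1 - (c - 1 - s * t + s + t) / (s + t - 1))) =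
      c - (3 * c - 1 / 2) * Real.log c -
        ((4 * c - 1) ^ ((3 : ℝ) / 2) / 3) *
          (Real.arctan (1 / Real.sqrt (4 * c - 1)) -
            Real.arctan ((2 * c - 1) / Real.sqrt (4 * c - 1))) :=
  iterated_integral_closed_form_general c hc0
end
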